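/- Let A be an m×n real matrix with columns a₁,…,aₙ. For every index i ∈ {1,…,n}, the following are equivalent: (1) there exists y ∈ ℝᵐ with Aᵀy ≥ 0 and aᵢᵀy > 0; (2) every x ∈ ℝⁿ with Ax = 0 and x ≥ 0 satisfies xᵢ = 0. -/

import Mathlib

/-!
(1) ⇒ (2): for `x ≥ 0` with `A x = 0`, the number `yᵀ A x = ∑ⱼ (Aᵀ y)ⱼ xⱼ` vanishes and is a sum
of nonnegative terms, so `(Aᵀ y)ᵢ xᵢ = 0`.

(2) ⇒ (1): after rescaling `xᵢ` to `1`, (2) says that `-aᵢ` is not a conic combination of the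
other columns, and Farkas' lemma provides `y`. Farkas' lemma is proved algebraically by induction
on the number of generators: if the functional separating `b` from the smaller cone is negative
on the new generator `a`, project everything along `a` onto its kernel and separate again there.
-/

open Matrix Finset

namespace PointedCone

section OrderedSemiring

variable {R E F : Type*} [Semiring R] [PartialOrder R] [IsOrderedRing R]
  [AddCommMonoid E] [Module R E] [AddCommMonoid F] [Module R F]

theorem hull_image (g : E →ₗ[R] F) (s : Set E) : hull R (g '' s) = (hull R s).map g :=
  Submodule.span_image (g.restrictScalars _)

theorem hull_le_comap_positive {s : Set E} {f : E →ₗ[R] R} (hf : ∀ x ∈ s, 0 ≤ f x) :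
    hull R s ≤ (positive R R).comap f :=
  Submodule.span_le.2 hf

end OrderedSemiring

variable {𝕜 M ι : Type*} [Field 𝕜] [LinearOrder 𝕜] [IsStrictOrderedRing 𝕜]
  [AddCommGroup M] [Module 𝕜 M]

theorem exists_dual_nonneg_neg_of_notMem_hull [DecidableEq ι] (s : Finset ι) (v : ι → M) {b : M}
    (hb : b ∉ hull 𝕜 (v '' s)) : ∃ f : Module.Dual 𝕜 M, (∀ j ∈ s, 0 ≤ f (v j)) ∧ f b < 0 := by
  induction s using Finset.induction_on generalizing v b with
  | empty =>
    have hb0 : b ≠ 0 := by simpa using hb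
    obtain ⟨f, hf⟩ := Module.Projective.exists_dual_eq_one 𝕜 hb0
    exact ⟨-f, by simp, by simp [hf]⟩
  | insert a s ha ih =>
    rw [coe_insert, Set.image_insert_eq] at hb
    obtain ⟨f, hf, hfb⟩ := ih v fun h ↦ hb (Submodule.span_mono (Set.subset_insert _ _) h)
    obtain hfa | hfa := le_or_gt 0 (f (v a))
    · exact ⟨f, forall_mem_insert _ _ _ |>.2 ⟨hfa, hf⟩, hfb⟩
    -- `g` projects along `v a` onto the kernel of `f`, so `f' ∘ g` vanishes on `v a`.
    set g : M →ₗ[𝕜] M := f (v a) • LinearMap.id - f.smulRight (v a) with hg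
    have hgb : g b ∉ hull 𝕜 ((g ∘ v) '' s) := by
      rw [Set.image_comp, hull_image]
      rintro ⟨z, hz, hgz⟩
      have hfz : 0 ≤ f z := hull_le_comap_positive (by simpa using hf) hz
      have hcoef : 0 ≤ (f b - f z) / f (v a) := div_nonneg_of_nonpos (by linarith) hfa.le
      refine hb (Submodule.mem_span_insert.2 ⟨⟨_, hcoef⟩, z, hz, ?_⟩)
      simp only [hg, LinearMap.coe_restrictScalars, LinearMap.sub_apply, LinearMap.smul_apply,
        LinearMap.id_apply, LinearMap.smulRight_apply] at hgz
      rw [Nonneg.mk_smul]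
      apply smul_right_injective M hfa.ne
      simp only [smul_add, smul_smul, mul_div_cancel₀ _ hfa.ne]
      linear_combination (norm := module) -hgz
    obtain ⟨f', hf', hf'b⟩ := ih (g ∘ v) hgb
    refine ⟨f' ∘ₗ g, forall_mem_insert _ _ _ |>.2 ⟨?_, hf'⟩, hf'b⟩
    simp [hg]

end PointedCone

theorem Module.Dual.apply_eq_dotProduct {R ι : Type*} [Fintype ι] [DecidableEq ι] [CommSemiring R]
    (f : Module.Dual R (ι → R)) (w : ι → R) : f w = w ⬝ᵥ fun k ↦ f (Pi.single k 1) := by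
  conv_lhs => rw [pi_eq_sum_univ' w]
  simp [dotProduct]

namespace Matrix

variable {R 𝕜 m ι : Type*} [Fintype ι]

theorem eq_zero_of_dotProduct_eq_zero [Semiring R] [PartialOrder R] [IsOrderedRing R]
    [NoZeroDivisors R] {u x : ι → R} (hu : ∀ j, 0 ≤ u j) (hx : ∀ j, 0 ≤ x j) (h : u ⬝ᵥ x = 0)
    {i : ι} (hi : 0 < u i) : x i = 0 :=
  (mul_eq_zero.1 <| (sum_eq_zero_iff_of_nonneg fun j _ ↦ mul_nonneg (hu j) (hx j)).1 h i
    (mem_univ i)).resolve_left hi.ne'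

theorem exists_nonneg_mulVec_eq_zero_of_neg_mem_hull [DecidableEq ι] [Field 𝕜] [LinearOrder 𝕜]
    [IsStrictOrderedRing 𝕜] {A : Matrix m ι 𝕜} {i : ι}
    (h : -Aᵀ i ∈ PointedCone.hull 𝕜 (Aᵀ '' ↑(univ.erase i))) :
    ∃ x, A *ᵥ x = 0 ∧ (∀ j, 0 ≤ x j) ∧ x i = 1 := by
  obtain ⟨c, hc⟩ := (Submodule.mem_span_image_finset_iff_exists_fun' _).1 h
  refine ⟨fun j ↦ if j = i then 1 else (c j : 𝕜), ?_, fun j ↦ ?_, by simp⟩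
  · rw [mulVec_eq_sum, ← add_sum_erase _ _ (mem_univ i)]
    simp only [op_smul_eq_smul, if_pos, one_smul]
    rw [← neg_eq_iff_add_eq_zero, ← hc]
    refine sum_congr rfl fun j hj ↦ ?_
    rw [if_neg (ne_of_mem_erase hj), Nonneg.coe_smul]
  · dsimp only
    split_ifs
    · exact zero_le_one
    · exact (c j).2

end Matrix

/-- Farkas-type equivalence: the index `i` admits a dual solution with `aᵢᵀ y > 0`
iff every primal solution has `xᵢ = 0`. -/
theorem dual_pos_iff_primal_zero {m n : ℕ} (A : Matrix (Fin m) (Fin n) ℝ) (i : Fin n) :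
    (∃ y : Fin m → ℝ, (∀ j, 0 ≤ (Aᵀ *ᵥ y) j) ∧ 0 < (Aᵀ *ᵥ y) i) ↔
    (∀ x : Fin n → ℝ, A *ᵥ x = 0 → (∀ j, 0 ≤ x j) → x i = 0) := by
  constructor
  · rintro ⟨y, hy, hyi⟩ x hAx hx
    refine eq_zero_of_dotProduct_eq_zero hy hx ?_ hyi
    rw [mulVec_transpose, ← dotProduct_mulVec, hAx, dotProduct_zero]
  · intro h
    have hi : -Aᵀ i ∉ PointedCone.hull ℝ (Aᵀ '' ↑(univ.erase i)) := fun hi ↦ by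
      obtain ⟨x, hAx, hx, hxi⟩ := exists_nonneg_mulVec_eq_zero_of_neg_mem_hull hi
      simpa [hxi] using h x hAx hx
    obtain ⟨f, hf, hfi⟩ := PointedCone.exists_dual_nonneg_neg_of_notMem_hull _ _ hi
    rw [map_neg, neg_lt_zero] at hfi
    have hAf : ∀ j, (Aᵀ *ᵥ fun k ↦ f (Pi.single k 1)) j = f (Aᵀ j) := fun j ↦
      (f.apply_eq_dotProduct _).symm
    refine ⟨fun k ↦ f (Pi.single k 1), fun j ↦ ?_, (hAf i).symm ▸ hfi⟩
    rw [hAf]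
    obtain rfl | hj := eq_or_ne j i
    · exact hfi.le
    · exact hf j (mem_erase.2 ⟨hj, mem_univ j⟩)
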